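/- Let f be a 3CNF formula whose conjunctive subformulas are pairwise independent as required by the translation, and φ_f its affine 2-modal translation. If there is an S5 Kripke structure M and world w with M,w ⊨ φ_f, then the assignment A = {a : M,w ⊨ a} satisfies f. -/

import Mathlib

/-- Affine multi-modal formulas: ⊤, ⊥, propositions, exclusive-or, and diamonds ◇_i. -/
inductive MF : Type where
  | top : MF
  | bot : MF
  | prop : ℕ → MF
  | xor : MF → MF → MF
  | dia : ℕ → MF → MF

/-- The derived box operator: □_i φ := (◇_i (φ ⊕ ⊤)) ⊕ ⊤. -/
def MF.box (i : ℕ) (φ : MF) : MF := .xor (.dia i (.xor φ .top)) .top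

/-- Satisfaction in a Kripke structure given relations `R` and labeling `ξ`. -/
def Sat {W : Type _} (R : ℕ → W → W → Prop) (ξ : ℕ → W → Prop) : MF → W → Prop
  | .top, _ => True
  | .bot, _ => False
  | .prop p, w => ξ p w
  | .xor φ ψ, w => Xor' (Sat R ξ φ w) (Sat R ξ ψ w)
  | .dia i φ, w => ∃ w', R i w w' ∧ Sat R ξ φ w'

/-- A literal is a variable or a negated variable. -/
inductive Lit : Type where
  | pos : ℕ → Lit
  | neg : ℕ → Lit

/-- The variable of a literal. -/
def Lit.var : Lit → ℕ
  | .pos n => n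
  | .neg n => n

/-- A 3-clause is a disjunction of three literals. -/
abbrev Clause := Lit × Lit × Lit

/-- The variables of a clause. -/
def Clause.vars (c : Clause) : List ℕ := [c.1.var, c.2.1.var, c.2.2.var]

/-- Satisfaction of a literal by a Boolean assignment. -/
def Lit.sat (A : ℕ → Bool) : Lit → Prop
  | .pos n => A n = true
  | .neg n => A n = false

/-- Satisfaction of a clause: some literal is satisfied. -/
def Clause.sat (A : ℕ → Bool) (c : Clause) : Prop :=
  c.1.sat A ∨ c.2.1.sat A ∨ c.2.2.sat A

/-- A CNF formula is a list of clauses; satisfaction means all clauses are satisfied. -/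
abbrev CNF := List Clause

def CNF.sat (A : ℕ → Bool) (f : CNF) : Prop := ∀ c ∈ f, c.sat A

/-- Satisfaction of a literal by an assignment (a set of true variables). -/
def Lit.satP (A : ℕ → Prop) : Lit → Prop
  | .pos n => A n
  | .neg n => ¬ A n

/-- Satisfaction of a clause by an assignment. -/
def Clause.satP (A : ℕ → Prop) (c : Clause) : Prop :=
  c.1.satP A ∨ c.2.1.satP A ∨ c.2.2.satP A

/-- Negation-free rendering of a literal: ¬a is a ⊕ ⊤. -/
def Lit.mf : Lit → MF
  | .pos n => .prop n
  | .neg n => .xor (.prop n) .top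

/-- Translation of a literal l: φ_l = (□_1 l) ⊕ (□_2 □_1 l). -/
def phiLit (l : Lit) : MF := .xor (MF.box 1 l.mf) (MF.box 2 (MF.box 1 l.mf))

/-- Translation of a clause: φ_C = ◇_1(φ_{l_1} ⊕ φ_{l_2} ⊕ φ_{l_3}). -/
def phiClause (c : Clause) : MF :=
  .dia 1 (.xor (.xor (phiLit c.1) (phiLit c.2.1)) (phiLit c.2.2))

/-- A bracketed CNF formula: a binary tree of conjunctions with clauses at leaves. -/
inductive CT : Type where
  | leaf : Clause → CT
  | and : CT → CT → CT

/-- The clauses of a bracketed CNF formula. -/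
def CT.clauses : CT → List Clause
  | .leaf c => [c]
  | .and g h => g.clauses ++ h.clauses

/-- The variables of a bracketed CNF formula. -/
def CT.vars (t : CT) : List ℕ := t.clauses.flatMap Clause.vars

/-- `g` is independent from `h`: some clause of `g` has all its variables absent from `h`. -/
def Indep (g h : CT) : Prop := ∃ c ∈ g.clauses, ∀ v ∈ c.vars, v ∉ h.vars

/-- `g` and `h` are strongly independent. -/
def StrongIndep (g h : CT) : Prop := Indep g h ∧ Indep h g

/-- The subformula relation on bracketed CNF formulas. -/
inductive Subf : CT → CT → Prop
  | refl (t : CT) : Subf t t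
  | left {s g h : CT} : Subf s g → Subf s (.and g h)
  | right {s g h : CT} : Subf s h → Subf s (.and g h)

/-- The affine 2-modal translation: φ_{g∧h} = ◇_1(ψ_g ⊕ ψ_h) ⊕ ◇_1 ψ_g ⊕ ◇_1 ψ_h,
where ψ_x = φ_x ⊕ □_2 φ_x. -/
def phiTree : CT → MF
  | .leaf c => phiClause c
  | .and g h =>
    let ψg := MF.xor (phiTree g) (MF.box 2 (phiTree g))
    let ψh := MF.xor (phiTree h) (MF.box 2 (phiTree h))
    .xor (.xor (.dia 1 (.xor ψg ψh)) (.dia 1 ψg)) (.dia 1 ψh)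


section Helpers
variable {W : Type _} {R : ℕ → W → W → Prop} {ξ : ℕ → W → Prop}

lemma sat_box_iff {i : ℕ} {φ : MF} {w : W} :
    Sat R ξ (MF.box i φ) w ↔ ∀ v, R i w v → Sat R ξ φ v := by
  simp only [MF.box, Sat, Xor']
  constructor
  · rintro (⟨_, h⟩ | ⟨_, h⟩) v hv
    · exact absurd trivial h
    · by_contra hb
      exact h ⟨v, hv, Or.inr ⟨trivial, hb⟩⟩
  · intro hall
    refine Or.inr ⟨trivial, ?_⟩
    rintro ⟨v, hv, (⟨_, hb⟩ | ⟨_, hb⟩)⟩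
    · exact hb trivial
    · exact hb (hall v hv)

lemma sat_litmf_iff {l : Lit} {w : W} :
    Sat R ξ l.mf w ↔ l.satP (fun a => ξ a w) := by
  cases l <;> simp [Lit.mf, Lit.satP, Sat, Xor', Xor]

lemma phiLit_forces (h2 : Reflexive (R 2)) {l : Lit} {v : W}
    (h : Sat R ξ (phiLit l) v) : ∀ u, R 1 v u → Sat R ξ l.mf u := by
  have h' : Xor' (Sat R ξ (MF.box 1 l.mf) v)
      (Sat R ξ (MF.box 2 (MF.box 1 l.mf)) v) := h
  rcases h' with ⟨hb, _⟩ | ⟨hb, _⟩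
  · exact fun u hu => sat_box_iff.mp hb u hu
  · exact fun u hu => sat_box_iff.mp (sat_box_iff.mp hb v (h2 v)) u hu

end Helpers


lemma xor3_bc {A B C : Prop} (hs : Xor' (Xor' A B) C)
    (f1 : ¬B → (A ↔ C)) (f2 : ¬C → (A ↔ B)) : B ∧ C := by
  simp only [Xor', Xor] at hs; tauto

lemma phiTree_aux {W : Type _} {R : ℕ → W → W → Prop} {ξ : ℕ → W → Prop}
    (h1 : Equivalence (R 1)) (h2 : Reflexive (R 2)) :
    ∀ t : CT, ∀ w v : W, R 1 w v → Sat R ξ (phiTree t) v →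
      ∀ c ∈ t.clauses, c.satP (fun a => ξ a w) := by
  intro t
  induction t with
  | leaf c =>
    intro w v hwv hs c' hc'
    simp only [CT.clauses, List.mem_singleton] at hc'
    rw [hc']
    obtain ⟨u, hvu, hx⟩ : ∃ u, R 1 v u ∧ Xor' (Xor' (Sat R ξ (phiLit c.1) u)
        (Sat R ξ (phiLit c.2.1) u)) (Sat R ξ (phiLit c.2.2) u) := hs
    have huw : R 1 u w := h1.symm (h1.trans hwv hvu)
    have key : ∀ l : Lit, Sat R ξ (phiLit l) u → Lit.satP (fun a => ξ a w) l := by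
      intro l hl
      exact sat_litmf_iff.mp (phiLit_forces h2 hl w huw)
    have hor : Sat R ξ (phiLit c.1) u ∨ Sat R ξ (phiLit c.2.1) u ∨
        Sat R ξ (phiLit c.2.2) u := by
      simp only [Xor', Xor] at hx; tauto
    rcases hor with h | h | h
    · exact Or.inl (key _ h)
    · exact Or.inr (Or.inl (key _ h))
    · exact Or.inr (Or.inr (key _ h))
  | and g h ihg ihh =>
    intro w v hwv hs c' hc'
    set ψg := MF.xor (phiTree g) (MF.box 2 (phiTree g)) with hψg
    set ψh := MF.xor (phiTree h) (MF.box 2 (phiTree h)) with hψh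
    have hpsi : ∀ (x : MF) (u : W),
        Sat R ξ (MF.xor x (MF.box 2 x)) u → Sat R ξ x u := by
      intro x u hx
      rcases hx with ⟨hx, _⟩ | ⟨hx, hnx⟩
      · exact hx
      · exact sat_box_iff.mp hx u (h2 u)
    have hs' : Xor' (Xor' (∃ u, R 1 v u ∧ Xor' (Sat R ξ ψg u) (Sat R ξ ψh u))
        (∃ u, R 1 v u ∧ Sat R ξ ψg u)) (∃ u, R 1 v u ∧ Sat R ξ ψh u) := hs
    have f1 : ¬(∃ u, R 1 v u ∧ Sat R ξ ψg u) →
        ((∃ u, R 1 v u ∧ Xor' (Sat R ξ ψg u) (Sat R ξ ψh u)) ↔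
          (∃ u, R 1 v u ∧ Sat R ξ ψh u)) := by
      intro hnB
      push_neg at hnB
      constructor
      · rintro ⟨u, hu, ⟨hg', _⟩ | ⟨hh', _⟩⟩
        · exact absurd hg' (hnB u hu)
        · exact ⟨u, hu, hh'⟩
      · rintro ⟨u, hu, hh'⟩
        exact ⟨u, hu, Or.inr ⟨hh', hnB u hu⟩⟩
    have f2 : ¬(∃ u, R 1 v u ∧ Sat R ξ ψh u) →
        ((∃ u, R 1 v u ∧ Xor' (Sat R ξ ψg u) (Sat R ξ ψh u)) ↔
          (∃ u, R 1 v u ∧ Sat R ξ ψg u)) := by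
      intro hnC
      push_neg at hnC
      constructor
      · rintro ⟨u, hu, ⟨hg', _⟩ | ⟨hh', _⟩⟩
        · exact ⟨u, hu, hg'⟩
        · exact absurd hh' (hnC u hu)
      · rintro ⟨u, hu, hg'⟩
        exact ⟨u, hu, Or.inl ⟨hg', hnC u hu⟩⟩
    have hBC : (∃ u, R 1 v u ∧ Sat R ξ ψg u) ∧ (∃ u, R 1 v u ∧ Sat R ξ ψh u) :=
      xor3_bc hs' f1 f2
    simp only [CT.clauses, List.mem_append] at hc'
    rcases hc' with hc' | hc'
    · obtain ⟨u, hvu, hu⟩ := hBC.1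
      exact ihg w u (h1.trans hwv hvu) (hpsi _ _ hu) c' hc'
    · obtain ⟨u, hvu, hu⟩ := hBC.2
      exact ihh w u (h1.trans hwv hvu) (hpsi _ _ hu) c' hc'

/-- if every conjunctive subformula of f has independent conjuncts and some
world w of an S5 structure satisfies φ_f, then the assignment A = {a : M,w ⊨ a}
satisfies f. -/
theorem phiTree_sound {W : Type _} (R : ℕ → W → W → Prop) (ξ : ℕ → W → Prop)
    (hS5 : ∀ i, Equivalence (R i)) (t : CT)
    (hindep : ∀ g h : CT, Subf (.and g h) t → StrongIndep g h)
    (w : W) (h : Sat R ξ (phiTree t) w) :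
    ∀ c ∈ t.clauses, c.satP (fun a => ξ a w) := by
  exact phiTree_aux (hS5 1) (fun x => (hS5 2).refl x) t w w ((hS5 1).refl w) h
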